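/- Let G = (V, E) be a finite directed graph with no self-loops, let Q ∈ ℕ, and let F_v : ℝ → ℝ (v ∈ V) and G_{uv} : ℝ → ℝ ((u,v) ∈ E) be convex functions, with J(x) = Σ_{v∈V} F_v(x_v) + Σ_{(u,v)∈E} G_{uv}(x_u − x_v) for x ∈ ℤ^V. Suppose x ∈ ℤ^V satisfies 0 ≤ x_v ≤ Q for all v, and that for every subset S ⊆ V inducing a connected subgraph and every sign ε ∈ {+1, −1}, if 0 ≤ x_v + ε·(χ_S)_v ≤ Q for all v then J(x) ≤ J(x + ε χ_S). Then x is globally optimal: J(x) ≤ J(y) for every y ∈ ℤ^V with 0 ≤ y_v ≤ Q for all v. -/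

import Mathlib

open scoped Classical

/-- The undirected support graph of the directed edge set `E`. -/
def undirGraph {V : Type*} (E : Finset (V × V)) : SimpleGraph V where
  Adj u v := u ≠ v ∧ ((u, v) ∈ E ∨ (v, u) ∈ E)
  symm := ⟨by
    intro u v h
    exact ⟨h.1.symm, h.2.elim Or.inr Or.inl⟩⟩
  loopless := ⟨by intro u h; exact h.1 rfl⟩

/-- `S ⊆ V` induces a connected subgraph of the (undirected version of the) graph. -/
def InducesConnected {V : Type*} (E : Finset (V × V)) (S : Set V) : Prop :=
  S.Nonempty ∧ ((undirGraph E).induce S).Connected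

/-- Integer indicator vector of a set of vertices. -/
noncomputable def chiV {V : Type*} (S : Set V) : V → ℤ :=
  S.indicator 1

/-- Integer indicator vector of a set of edges. -/
noncomputable def chiE {V : Type*} {E : Finset (V × V)}
    (T : Set {e : V × V // e ∈ E}) : {e : V × V // e ∈ E} → ℤ :=
  T.indicator 1

/-- Outgoing edges of `S`. -/
def deltaPlus {V : Type*} (E : Finset (V × V)) (S : Set V) :
    Set {e : V × V // e ∈ E} :=
  {e | (e : V × V).1 ∈ S ∧ (e : V × V).2 ∉ S}

/-- Incoming edges of `S`. -/
def deltaMinus {V : Type*} (E : Finset (V × V)) (S : Set V) :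
    Set {e : V × V // e ∈ E} :=
  {e | (e : V × V).1 ∉ S ∧ (e : V × V).2 ∈ S}

/-- The conformal (sign-compatible, coordinatewise) partial order `x ⊑ y`. -/
def Sqle {ι : Type*} (x y : ι → ℤ) : Prop :=
  ∀ i, 0 ≤ x i * y i ∧ |x i| ≤ |y i|

/-- `(x, a)` lies in the integer kernel of `A_TV`. -/
def InKerATV {V : Type*} (E : Finset (V × V)) (x : V → ℤ)
    (a : {e : V × V // e ∈ E} → ℤ) : Prop :=
  ∀ e : {e : V × V // e ∈ E}, x (e : V × V).1 - x (e : V × V).2 = a e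

/-- `(x, a)` is a Graver basis element of `A_TV`: a `⊑`-minimal nonzero
element of the integer kernel. -/
def InGraverATV {V : Type*} (E : Finset (V × V)) (x : V → ℤ)
    (a : {e : V × V // e ∈ E} → ℤ) : Prop :=
  InKerATV E x a ∧ ¬(x = 0 ∧ a = 0) ∧
    ∀ (x' : V → ℤ) (a' : {e : V × V // e ∈ E} → ℤ),
      InKerATV E x' a' → ¬(x' = 0 ∧ a' = 0) → Sqle x' x → Sqle a' a →
        x' = x ∧ a' = a

/-- The objective `J(x) = Σ_v F_v(x_v) + Σ_{(u,v)∈E} G_{uv}(x_u − x_v)`. -/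
noncomputable def JObj {V : Type*} [Fintype V] (E : Finset (V × V))
    (F : V → ℝ → ℝ) (Gf : V × V → ℝ → ℝ) (x : V → ℤ) : ℝ :=
  (∑ v, F v (x v : ℝ)) + ∑ e ∈ E, Gf e ((x e.1 : ℝ) - (x e.2 : ℝ))

/-! If `y ≠ x` is feasible, put `d = y - x`, pick `v₀` with `d v₀ ≠ 0`, let `ε` be the sign of
`d v₀` and `S` the connected component of `v₀` in the subgraph induced by `{v | 0 < ε * d v}`.
Every edge leaving `S` ends where `ε * d ≤ 0`, so `ε • χ_S` together with its edge differences is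
conformal (`Sqle`) to `d` together with its edge differences. For an objective that is a sum of
convex functions of these coordinates, conformality gives
`J(x + ε χ_S) + J(y - ε χ_S) ≤ J(x) + J(y)`. The first term is at least `J(x)` by hypothesis and
the second by induction on `‖y - x‖₁`, which drops by `|S|`; both points stay in the box because
they lie coordinatewise between `x` and `y`. -/

theorem ConvexOn.map_add_add_map_sub_le {s : Set ℝ} {f : ℝ → ℝ} (hf : ConvexOn ℝ s f)
    {a b c : ℝ} (ha : a ∈ s) (hb : b ∈ s) (hc : 0 ≤ c * (b - a)) (hcb : |c| ≤ |b - a|) :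
    f (a + c) + f (b - c) ≤ f a + f b := by
  obtain hab | hab := eq_or_ne (b - a) 0
  · obtain rfl : c = 0 := by simpa [hab] using hcb
    simp
  set t := c / (b - a)
  have ht₀ : 0 ≤ t := by
    rw [show t = c * (b - a) / ((b - a) * (b - a)) by rw [mul_div_mul_right _ _ hab]]
    exact div_nonneg hc (mul_self_nonneg _)
  have ht₁ : t ≤ 1 := calc
    t = |c| / |b - a| := by rw [← abs_div, abs_of_nonneg ht₀]
    _ ≤ 1 := div_le_one_of_le₀ hcb (abs_nonneg _)
  have hct : t * (b - a) = c := div_mul_cancel₀ c hab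
  have h₁ := hf.2 ha hb (sub_nonneg.2 ht₁) ht₀ (sub_add_cancel 1 t)
  have h₂ := hf.2 hb ha (sub_nonneg.2 ht₁) ht₀ (sub_add_cancel 1 t)
  simp only [smul_eq_mul] at h₁ h₂
  rw [show (1 - t) * a + t * b = a + c by rw [← hct]; ring] at h₁
  rw [show (1 - t) * b + t * a = b - c by rw [← hct]; ring] at h₂
  linarith

namespace Int

theorem mem_uIcc_zero_of_conformal {c d : ℤ} (hc : 0 ≤ c * d) (hcd : |c| ≤ |d|) :
    c ∈ Set.uIcc 0 d := by
  rw [Set.mem_uIcc]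
  rcases abs_cases c with ⟨h₁, h₂⟩ | ⟨h₁, h₂⟩ <;> rcases abs_cases d with ⟨h₃, h₄⟩ | ⟨h₃, h₄⟩
  · exact Or.inl ⟨h₂, by omega⟩
  · exact Or.inr ⟨by nlinarith, by nlinarith⟩
  · exact Or.inl ⟨by nlinarith, by nlinarith⟩
  · exact Or.inr ⟨by omega, h₂.le⟩

theorem conformal_of_abs_eq_one {c d : ℤ} (hc : |c| = 1) (hcd : 0 < c * d) :
    0 ≤ c * d ∧ |c| ≤ |d| := by
  refine ⟨hcd.le, ?_⟩
  calc |c| = 1 := hc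
    _ ≤ |c * d| := hcd.trans_le (le_abs_self _)
    _ = |d| := by rw [abs_mul, hc, one_mul]

end Int

namespace SimpleGraph

variable {V : Type*} (G : SimpleGraph V)

theorem induce_singleton_connected (v : V) : (G.induce {v}).Connected :=
  Connected.of_subsingleton

/-- The vertex set of the connected component of `v₀` in `G.induce U`; empty if `v₀ ∉ U`. -/
def connectedComponentIn (U : Set V) (v₀ : V) : Set V :=
  ⋃₀ {T | v₀ ∈ T ∧ T ⊆ U ∧ (G.induce T).Connected}

variable {G} {U : Set V} {v₀ : V}

theorem connectedComponentIn_subset : G.connectedComponentIn U v₀ ⊆ U :=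
  Set.sUnion_subset fun _ hT => hT.2.1

theorem mem_connectedComponentIn (h : v₀ ∈ U) : v₀ ∈ G.connectedComponentIn U v₀ :=
  ⟨{v₀}, ⟨rfl, Set.singleton_subset_iff.2 h, G.induce_singleton_connected v₀⟩, rfl⟩

theorem connected_induce_connectedComponentIn (h : v₀ ∈ U) :
    (G.induce (G.connectedComponentIn U v₀)).Connected :=
  G.induce_sUnion_connected_of_pairwise_not_disjoint
    ⟨{v₀}, rfl, Set.singleton_subset_iff.2 h, G.induce_singleton_connected v₀⟩
    (fun hS hT => ⟨v₀, hS.1, hT.1⟩) (fun hT => hT.2.2)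

theorem mem_connectedComponentIn_of_adj {u w : V} (hu : u ∈ G.connectedComponentIn U v₀)
    (hw : w ∈ U) (huw : G.Adj u w) : w ∈ G.connectedComponentIn U v₀ := by
  obtain ⟨T, ⟨hT₀, hTU, hT⟩, huT⟩ := hu
  refine ⟨T ∪ {w}, ⟨Or.inl hT₀, Set.union_subset hTU (Set.singleton_subset_iff.2 hw), ?_⟩,
    Or.inr rfl⟩
  exact G.connected_induce_union hT.preconnected (G.induce_singleton_connected w).preconnected
    huT rfl huw

end SimpleGraph

/-- The edge part of the kernel elements of `A_TV`: `InKerATV E z a ↔ a = edgeDiff E z`. -/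
def edgeDiff {V : Type*} (E : Finset (V × V)) (z : V → ℤ) : {e : V × V // e ∈ E} → ℤ :=
  fun e => z e.1.1 - z e.1.2

section Conformal

variable {ι : Type*}

theorem Sqle.add_mem_Icc {x y δ : ι → ℤ} {lo hi : ℤ} (hδ : Sqle δ (y - x))
    (hx : ∀ i, lo ≤ x i ∧ x i ≤ hi) (hy : ∀ i, lo ≤ y i ∧ y i ≤ hi) (i : ι) :
    lo ≤ x i + δ i ∧ x i + δ i ≤ hi := by
  have h := Int.mem_uIcc_zero_of_conformal (hδ i).1 (hδ i).2
  rw [Set.mem_uIcc, Pi.sub_apply] at h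
  have := hx i; have := hy i
  omega

theorem Sqle.sub_mem_Icc {x y δ : ι → ℤ} {lo hi : ℤ} (hδ : Sqle δ (y - x))
    (hx : ∀ i, lo ≤ x i ∧ x i ≤ hi) (hy : ∀ i, lo ≤ y i ∧ y i ≤ hi) (i : ι) :
    lo ≤ y i - δ i ∧ y i - δ i ≤ hi := by
  have h := Int.mem_uIcc_zero_of_conformal (hδ i).1 (hδ i).2
  rw [Set.mem_uIcc, Pi.sub_apply] at h
  have := hx i; have := hy i
  omega

theorem Sqle.sum_natAbs_sub_lt [Fintype ι] {δ d : ι → ℤ} (hδ : Sqle δ d) (hδ₀ : δ ≠ 0) :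
    ∑ i, ((d - δ) i).natAbs < ∑ i, (d i).natAbs := by
  have key : ∀ i, ((d - δ) i).natAbs + (δ i).natAbs = (d i).natAbs := fun i => by
    have h := Int.mem_uIcc_zero_of_conformal (hδ i).1 (hδ i).2
    rw [Set.mem_uIcc] at h
    rw [Pi.sub_apply]
    omega
  obtain ⟨i, hi⟩ := Function.ne_iff.1 hδ₀
  refine Finset.sum_lt_sum (fun j _ => (key j).symm ▸ Nat.le_add_right _ _)
    ⟨i, Finset.mem_univ _, ?_⟩
  have := key i
  have : (δ i).natAbs ≠ 0 := Int.natAbs_ne_zero.2 hi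
  omega

end Conformal

theorem ConvexOn.map_intCast_add_add_map_intCast_sub_le {f : ℝ → ℝ}
    (hf : ConvexOn ℝ Set.univ f) {a b c : ℤ} (hc : 0 ≤ c * (b - a)) (hcb : |c| ≤ |b - a|) :
    f ((a + c : ℤ) : ℝ) + f ((b - c : ℤ) : ℝ) ≤ f a + f b := by
  push_cast
  exact hf.map_add_add_map_sub_le trivial trivial (by exact_mod_cast hc) (by exact_mod_cast hcb)

theorem JObj_add_add_JObj_sub_le {V : Type*} [Fintype V] (E : Finset (V × V))
    (F : V → ℝ → ℝ) (Gf : V × V → ℝ → ℝ)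
    (hF : ∀ v, ConvexOn ℝ Set.univ (F v)) (hG : ∀ e ∈ E, ConvexOn ℝ Set.univ (Gf e))
    {x y δ : V → ℤ} (hδ : Sqle δ (y - x)) (hδE : Sqle (edgeDiff E δ) (edgeDiff E (y - x))) :
    JObj E F Gf (x + δ) + JObj E F Gf (y - δ) ≤ JObj E F Gf x + JObj E F Gf y := by
  have hV : ∀ v ∈ Finset.univ, F v ((x + δ) v : ℝ) + F v ((y - δ) v : ℝ) ≤
      F v (x v : ℝ) + F v (y v : ℝ) := fun v _ =>
    (hF v).map_intCast_add_add_map_intCast_sub_le (hδ v).1 (hδ v).2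
  have hE : ∀ e ∈ E,
      Gf e (((x + δ) e.1 : ℝ) - ((x + δ) e.2 : ℝ)) +
        Gf e (((y - δ) e.1 : ℝ) - ((y - δ) e.2 : ℝ)) ≤
      Gf e ((x e.1 : ℝ) - (x e.2 : ℝ)) + Gf e ((y e.1 : ℝ) - (y e.2 : ℝ)) := fun e he => by
    obtain ⟨h₀, h₁⟩ := hδE ⟨e, he⟩
    have hba : edgeDiff E (y - x) ⟨e, he⟩ = (y e.1 - y e.2) - (x e.1 - x e.2) := by
      simp only [edgeDiff, Pi.sub_apply]; ring
    rw [hba] at h₀ h₁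
    have := (hG e he).map_intCast_add_add_map_intCast_sub_le h₀ h₁
    simp only [edgeDiff] at this
    convert this using 3 <;> push_cast [Pi.add_apply, Pi.sub_apply] <;> ring
  have hVsum := Finset.sum_le_sum hV
  have hEsum := Finset.sum_le_sum hE
  simp only [Finset.sum_add_distrib] at hVsum hEsum
  simp only [JObj]
  linarith

section Shift

variable {V : Type*} {E : Finset (V × V)} {d : V → ℤ} {ε : ℤ} {S : Set V}

theorem smul_chiV_ne_zero (hε : ε ≠ 0) (hS : S.Nonempty) : ε • chiV S ≠ 0 := by
  obtain ⟨v, hv⟩ := hS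
  refine Function.ne_iff.2 ⟨v, ?_⟩
  simpa [chiV, hv] using hε

theorem sqle_smul_chiV (hε : |ε| = 1) (hS : ∀ v ∈ S, 0 < ε * d v) : Sqle (ε • chiV S) d := by
  intro v
  by_cases hv : v ∈ S
  · simpa [chiV, hv] using Int.conformal_of_abs_eq_one hε (hS v hv)
  · simp [chiV, hv]

theorem sqle_edgeDiff_smul_chiV (hε : |ε| = 1) (hS : ∀ v ∈ S, 0 < ε * d v)
    (hclosed : ∀ u ∈ S, ∀ w, (undirGraph E).Adj u w → 0 < ε * d w → w ∈ S) :
    Sqle (edgeDiff E (ε • chiV S)) (edgeDiff E d) := by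
  rintro ⟨⟨u, w⟩, he⟩
  have hout {a b : V} (ha : a ∈ S) (hb : b ∉ S) (hab : (undirGraph E).Adj a b) :
      ε * d b ≤ 0 :=
    not_lt.1 fun h => hb (hclosed a ha b hab h)
  simp only [edgeDiff, Pi.smul_apply, chiV, smul_eq_mul]
  by_cases hu : u ∈ S <;> by_cases hw : w ∈ S
  · simp [hu, hw]
  · have := hout hu hw ⟨ne_of_mem_of_not_mem hu hw, Or.inl he⟩
    simpa [hu, hw] using
      Int.conformal_of_abs_eq_one hε (by linarith [hS u hu] : 0 < ε * (d u - d w))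
  · have := hout hw hu ⟨ne_of_mem_of_not_mem hw hu, Or.inr he⟩
    simpa [hu, hw] using Int.conformal_of_abs_eq_one (c := -ε) (by rwa [abs_neg])
      (by linarith [hS w hw] : 0 < -ε * (d u - d w))
  · simp [hu, hw]

end Shift

theorem exists_connected_sqle_shift {V : Type*} (E : Finset (V × V)) {d : V → ℤ} (hd : d ≠ 0) :
    ∃ (S : Set V) (ε : ℤ), |ε| = 1 ∧ InducesConnected E S ∧
      Sqle (ε • chiV S) d ∧ Sqle (edgeDiff E (ε • chiV S)) (edgeDiff E d) := by
  obtain ⟨v₀, hv₀⟩ := Function.ne_iff.1 hd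
  set ε := (d v₀).sign
  have hε : |ε| = 1 := Int.abs_sign_of_ne_zero hv₀
  set U := {v | 0 < ε * d v}
  have hv₀U : v₀ ∈ U := by
    simpa [U, ε, Int.sign_mul_self_eq_abs] using hv₀
  have hSU : ∀ v ∈ (undirGraph E).connectedComponentIn U v₀, 0 < ε * d v :=
    fun v hv => (SimpleGraph.connectedComponentIn_subset hv : v ∈ U)
  refine ⟨_, ε, hε, ⟨⟨v₀, SimpleGraph.mem_connectedComponentIn hv₀U⟩,
    SimpleGraph.connected_induce_connectedComponentIn hv₀U⟩, sqle_smul_chiV hε hSU,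
    sqle_edgeDiff_smul_chiV hε hSU fun u hu w huw hw =>
      SimpleGraph.mem_connectedComponentIn_of_adj hu hw huw⟩

theorem graver_moves_optimality_certificate_general
    {V : Type*} [Fintype V] (E : Finset (V × V))
    (Q : ℕ)
    (F : V → ℝ → ℝ) (Gf : V × V → ℝ → ℝ)
    (hF : ∀ v, ConvexOn ℝ Set.univ (F v))
    (hG : ∀ e ∈ E, ConvexOn ℝ Set.univ (Gf e))
    (x : V → ℤ) (hx : ∀ v, 0 ≤ x v ∧ x v ≤ (Q : ℤ))
    (hopt : ∀ (S : Set V) (ε : ℤ), (ε = 1 ∨ ε = -1) → InducesConnected E S →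
      (∀ v, 0 ≤ x v + ε * chiV S v ∧ x v + ε * chiV S v ≤ (Q : ℤ)) →
      JObj E F Gf x ≤ JObj E F Gf (x + ε • chiV S)) :
    ∀ y : V → ℤ, (∀ v, 0 ≤ y v ∧ y v ≤ (Q : ℤ)) →
      JObj E F Gf x ≤ JObj E F Gf y := by
  intro y hy
  induction hn : ∑ v, ((y - x) v).natAbs using Nat.strong_induction_on generalizing y with
  | _ n ih =>
  obtain rfl | hxy := eq_or_ne y x
  · exact le_rfl
  obtain ⟨S, ε, hε, hS, hδ, hδE⟩ := exists_connected_sqle_shift E (sub_ne_zero.2 hxy)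
  have hδ₀ : ε • chiV S ≠ 0 := smul_chiV_ne_zero (by rintro rfl; simp at hε) hS.1
  have hmove : JObj E F Gf x ≤ JObj E F Gf (x + ε • chiV S) :=
    hopt S ε ((abs_eq zero_le_one).1 hε) hS (hδ.add_mem_Icc hx hy)
  have hrest : JObj E F Gf x ≤ JObj E F Gf (y - ε • chiV S) := by
    refine ih _ ?_ _ (hδ.sub_mem_Icc hx hy) rfl
    rw [← hn, sub_right_comm]
    exact hδ.sum_natAbs_sub_lt hδ₀
  linarith [JObj_add_add_JObj_sub_le E F Gf hF hG hδ hδE]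

/-- If no up- or down-shift on a subset inducing a connected
subgraph improves the objective, then `x` is globally optimal over the box. -/
theorem graver_moves_optimality_certificate
    {V : Type*} [Fintype V] [DecidableEq V] (E : Finset (V × V))
    (hloop : ∀ e ∈ E, e.1 ≠ e.2) (Q : ℕ)
    (F : V → ℝ → ℝ) (Gf : V × V → ℝ → ℝ)
    (hF : ∀ v, ConvexOn ℝ Set.univ (F v))
    (hG : ∀ e ∈ E, ConvexOn ℝ Set.univ (Gf e))
    (x : V → ℤ) (hx : ∀ v, 0 ≤ x v ∧ x v ≤ (Q : ℤ))
    (hopt : ∀ (S : Set V) (ε : ℤ), (ε = 1 ∨ ε = -1) → InducesConnected E S →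
      (∀ v, 0 ≤ x v + ε * chiV S v ∧ x v + ε * chiV S v ≤ (Q : ℤ)) →
      JObj E F Gf x ≤ JObj E F Gf (x + ε • chiV S)) :
    ∀ y : V → ℤ, (∀ v, 0 ≤ y v ∧ y v ≤ (Q : ℤ)) →
      JObj E F Gf x ≤ JObj E F Gf y :=
  graver_moves_optimality_certificate_general E Q F Gf hF hG x hx hopt
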